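/- arXiv:math/0601607 — 3 statements merged into one kernel-verified Lean document; each statement's English description precedes it below -/
import Mathlib

section
/- H^1_{R,r}(q), the +1-eigenspace of the Goldman involution, equals the R-span of all products of an even number of the elements T'_i = (2T_i-(q-q^{-1}))/(q+q^{-1}); in particular it is a subalgebra of H_{R,r}(q). -/
/-- Defining relations of the type A Iwahori-Hecke algebra with `n` generators. -/
inductive HeckeRel (R : Type*) [CommRing R] (q qi : R) (n : ℕ) :
    FreeAlgebra R (Fin n) → FreeAlgebra R (Fin n) → Prop
  | quad (i : Fin n) :
      HeckeRel R q qi n (FreeAlgebra.ι R i * FreeAlgebra.ι R i)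
        (algebraMap R _ (q - qi) * FreeAlgebra.ι R i + 1)
  | braid (i j : Fin n) (h : (j : ℕ) = (i : ℕ) + 1) :
      HeckeRel R q qi n (FreeAlgebra.ι R i * FreeAlgebra.ι R j * FreeAlgebra.ι R i)
        (FreeAlgebra.ι R j * FreeAlgebra.ι R i * FreeAlgebra.ι R j)
  | comm (i j : Fin n) (h : (i : ℕ) + 1 < (j : ℕ)) :
      HeckeRel R q qi n (FreeAlgebra.ι R i * FreeAlgebra.ι R j)
        (FreeAlgebra.ι R j * FreeAlgebra.ι R i)

/-- The type A Iwahori-Hecke algebra with `n` generators. -/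
abbrev Hecke (R : Type*) [CommRing R] (q qi : R) (n : ℕ) := RingQuot (HeckeRel R q qi n)

/-- The standard generators `T_i`. -/
noncomputable def Tgen (R : Type*) [CommRing R] (q qi : R) (n : ℕ) (i : Fin n) :
    Hecke R q qi n :=
  RingQuot.mkAlgHom R (HeckeRel R q qi n) (FreeAlgebra.ι R i)

/-- The elements `T'_i = (2T_i - (q-q⁻¹))/(q+q⁻¹)`, where `c = (q+q⁻¹)⁻¹`. -/
noncomputable def Tp (R : Type*) [CommRing R] (q qi c : R) (n : ℕ) (i : Fin n) :
    Hecke R q qi n :=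
  algebraMap R (Hecke R q qi n) c * (2 * Tgen R q qi n i - algebraMap R _ (q - qi))

section Aux

variable {R : Type*} [CommRing R] {q qi c : R} {n : ℕ}

lemma hat_Tp (hat : Hecke R q qi n ≃ₐ[R] Hecke R q qi n)
    (hhat : ∀ i, hat (Tgen R q qi n i) =
      algebraMap R (Hecke R q qi n) (q - qi) - Tgen R q qi n i) (i : Fin n) :
    hat (Tp R q qi c n i) = - Tp R q qi c n i := by
  rw [Tp, map_mul, AlgEquiv.commutes, map_sub, map_mul, map_ofNat,
    AlgEquiv.commutes, hhat]
  rw [show (2 : Hecke R q qi n) * (algebraMap R (Hecke R q qi n) (q - qi) - Tgen R q qi n i) -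
      algebraMap R (Hecke R q qi n) (q - qi) =
      -(2 * Tgen R q qi n i - algebraMap R (Hecke R q qi n) (q - qi)) from by noncomm_ring]
  exact mul_neg (α := Hecke R q qi n) _ _

lemma hat_prod (hat : Hecke R q qi n ≃ₐ[R] Hecke R q qi n)
    (hTp : ∀ i, hat (Tp R q qi c n i) = - Tp R q qi c n i) (l : List (Fin n)) :
    hat ((l.map (Tp R q qi c n)).prod) =
      if Even l.length then (l.map (Tp R q qi c n)).prod
      else -((l.map (Tp R q qi c n)).prod) := by
  induction l with
  | nil => simp
  | cons i t ih =>
    simp only [List.map_cons, List.prod_cons, map_mul, hTp, List.length_cons,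
      Nat.even_add_one, ih]
    by_cases he : Even t.length
    · rw [if_pos he, if_neg (not_not_intro he)]
      exact neg_mul (α := Hecke R q qi n) _ _
    · rw [if_neg he, if_pos he]
      exact neg_mul_neg (α := Hecke R q qi n) _ _

lemma closure_elem (y : Hecke R q qi n)
    (hy : y ∈ Submonoid.closure (Set.range (Tp R q qi c n))) :
    ∃ l : List (Fin n), y = (l.map (Tp R q qi c n)).prod := by
  induction hy using Submonoid.closure_induction with
  | mem x hx => obtain ⟨i, rfl⟩ := hx; exact ⟨[i], by simp⟩
  | one => exact ⟨[], by simp⟩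
  | mul x y _ _ hx hy =>
    obtain ⟨l1, rfl⟩ := hx
    obtain ⟨l2, rfl⟩ := hy
    exact ⟨l1 ++ l2, by simp⟩

end Aux

/-- The `+1`-eigenspace `H¹_{R,r}(q)` of the Goldman involution equals the `R`-span of all
products of an even number of the elements `T'_i`; in particular it is a subalgebra of
`H_{R,r}(q)`. -/
theorem stmt_8 (R : Type*) [CommRing R] [IsDomain R]
    (q qi c h : R) (hq : q * qi = 1) (hc : (q + qi) * c = 1) (h2 : (2 : R) * h = 1)
    (n : ℕ)
    (hat : Hecke R q qi n ≃ₐ[R] Hecke R q qi n)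
    (hinv : ∀ x, hat (hat x) = x)
    (hhat : ∀ i, hat (Tgen R q qi n i) =
      algebraMap R (Hecke R q qi n) (q - qi) - Tgen R q qi n i) :
    LinearMap.ker (hat.toLinearMap - LinearMap.id) =
      Submodule.span R
        {x : Hecke R q qi n |
          ∃ l : List (Fin n), Even l.length ∧ x = (l.map (Tp R q qi c n)).prod} ∧
    (1 : Hecke R q qi n) ∈ LinearMap.ker (hat.toLinearMap - LinearMap.id) ∧
    ∀ x ∈ LinearMap.ker (hat.toLinearMap - LinearMap.id),
      ∀ y ∈ LinearMap.ker (hat.toLinearMap - LinearMap.id),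
        x * y ∈ LinearMap.ker (hat.toLinearMap - LinearMap.id) := by
  have hTp := fun i => hat_Tp (c := c) hat hhat i
  have memker : ∀ x : Hecke R q qi n,
      x ∈ LinearMap.ker (hat.toLinearMap - LinearMap.id) ↔ hat x = x := by
    intro x
    simp [LinearMap.mem_ker, LinearMap.sub_apply, sub_eq_zero]
  set S : Set (Hecke R q qi n) :=
    {x : Hecke R q qi n |
      ∃ l : List (Fin n), Even l.length ∧ x = (l.map (Tp R q qi c n)).prod} with hS
  refine ⟨?_, (memker 1).2 (map_one _), fun x hx y hy => (memker _).2 (by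
    rw [map_mul, (memker x).1 hx, (memker y).1 hy])⟩
  -- main equality
  apply le_antisymm
  · -- ker ≤ span
    intro x hx
    have hfix : hat x = x := (memker x).1 hx
    -- the algebra is generated by the Tp's
    have hTgen_top : Algebra.adjoin R (Set.range (Tgen R q qi n)) = ⊤ := by
      have h1 : Set.range (Tgen R q qi n) =
          (RingQuot.mkAlgHom R (HeckeRel R q qi n)) '' Set.range (FreeAlgebra.ι R) := by
        rw [← Set.range_comp]; rfl
      rw [h1, ← AlgHom.map_adjoin, FreeAlgebra.adjoin_range_ι, Algebra.map_top]
      rw [AlgHom.range_eq_top]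
      exact RingQuot.mkAlgHom_surjective R _
    have key : ∀ i, Tgen R q qi n i =
        algebraMap R (Hecke R q qi n) (h * (q + qi)) * Tp R q qi c n i +
          algebraMap R (Hecke R q qi n) (h * (q - qi)) := by
      intro i
      rw [Tp, ← mul_assoc, ← map_mul,
        show h * (q + qi) * c = h by rw [mul_assoc, hc, mul_one],
        mul_sub, ← map_mul, sub_add_cancel, ← mul_assoc,
        show algebraMap R (Hecke R q qi n) h * 2 = 1 by
          rw [← map_ofNat (algebraMap R (Hecke R q qi n)) 2, ← map_mul,
            mul_comm, h2, map_one],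
        one_mul]
    have hTp_top : Algebra.adjoin R (Set.range (Tp R q qi c n)) = ⊤ := by
      rw [eq_top_iff, ← hTgen_top]
      apply Algebra.adjoin_le
      rintro _ ⟨i, rfl⟩
      rw [key i]
      exact Subalgebra.add_mem _
        (Subalgebra.mul_mem _ (Subalgebra.algebraMap_mem _ _)
          (Algebra.subset_adjoin ⟨i, rfl⟩))
        (Subalgebra.algebraMap_mem _ _)
    have hx_span : x ∈ Submodule.span R
        ((Submonoid.closure (Set.range (Tp R q qi c n)) : Submonoid (Hecke R q qi n)) :
          Set (Hecke R q qi n)) := by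
      rw [← Algebra.adjoin_eq_span, hTp_top]
      trivial
    -- the symmetrization projection
    set P : Hecke R q qi n →ₗ[R] Hecke R q qi n :=
      h • (LinearMap.id + hat.toLinearMap) with hP
    have hPx : P x = x := by
      simp only [hP, LinearMap.smul_apply, LinearMap.add_apply, LinearMap.id_apply,
        AlgEquiv.toLinearMap_apply, hfix]
      rw [smul_add, ← add_smul, ← two_mul, h2, one_smul]
    have hclos : ∀ y ∈ Submonoid.closure (Set.range (Tp R q qi c n)),
        P y ∈ Submodule.span R S := by
      intro y hy
      obtain ⟨l, rfl⟩ := closure_elem y hy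
      have hprod := hat_prod (c := c) hat hTp l
      by_cases he : Even l.length
      · have : P ((l.map (Tp R q qi c n)).prod) = (l.map (Tp R q qi c n)).prod := by
          simp only [hP, LinearMap.smul_apply, LinearMap.add_apply, LinearMap.id_apply,
            AlgEquiv.toLinearMap_apply, hprod, if_pos he]
          rw [smul_add, ← add_smul, ← two_mul, h2, one_smul]
        rw [this]
        exact Submodule.subset_span ⟨l, he, rfl⟩
      · have : P ((l.map (Tp R q qi c n)).prod) = 0 := by
          simp only [hP, LinearMap.smul_apply, LinearMap.add_apply, LinearMap.id_apply,
            AlgEquiv.toLinearMap_apply, hprod, if_neg he]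
          simp
        rw [this]
        exact Submodule.zero_mem _
    have : x ∈ Submodule.comap P (Submodule.span R S) := by
      refine Submodule.span_le.2 ?_ hx_span
      intro y hy
      exact hclos y hy
    simpa [Submodule.mem_comap, hPx] using this
  · -- span ≤ ker
    rw [Submodule.span_le]
    rintro _ ⟨l, he, rfl⟩
    refine (memker _).2 ?_
    rw [hat_prod (c := c) hat hTp l, if_pos he]
end

section
/- H_{R,r}(q) decomposes as a direct sum of left H^1_{R,r}(q)-modules: H_{R,r}(q) = H^1_{R,r}(q) ⊕ H^1_{R,r}(q)·T'_1, where T'_1 = (2T_1-(q-q^{-1}))/(q+q^{-1}) satisfies (T'_1)^2 = 1. -/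
lemma aux_key' {A : Type*} [Ring A] (T a : A) (hq : T*T = a*T+1) (hTa : T*a = a*T) :
    (2*T - a)*(2*T - a) = a*a + 4 := by
  have e : (2*T - a)*(2*T - a) = 4*(T*T) - 2*(T*a) - 2*(a*T) + a*a := by noncomm_ring
  rw [e, hq, hTa]
  noncomm_ring
  simp [add_comm]

lemma aux_neg1 {A : Type*} [Ring A] (x y z : A) : x*(2*(y - z) - y) = -(x*(2*z - y)) := by
  noncomm_ring

lemma aux_neg2 {A : Type*} [Ring A] (x y z : A) : x*(y - z) = -(x*(z - y)) := by noncomm_ring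

lemma aux_add {A : Type*} [Ring A] (x y : A) : (x + y) + (x - y) = 2*x := by noncomm_ring

/-- `H_{R,r}(q)` decomposes as a direct sum of left `H¹_{R,r}(q)`-modules
`H = H¹ ⊕ H¹·T'_1`, where `H¹` is the `+1`-eigenspace of the Goldman involution and
`T'_1 = (2T_1 - (q-q⁻¹))/(q+q⁻¹)` satisfies `(T'_1)² = 1`. -/
theorem stmt_9 (R : Type*) [CommRing R] [IsDomain R]
    (q qi c h : R) (hq : q * qi = 1) (hc : (q + qi) * c = 1) (h2 : (2 : R) * h = 1)
    (r : ℕ) (hr : 2 ≤ r)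
    (hat : Hecke R q qi (r - 1) ≃ₐ[R] Hecke R q qi (r - 1))
    (hinv : ∀ x, hat (hat x) = x)
    (hhat : ∀ i, hat (Tgen R q qi (r - 1) i) =
      algebraMap R (Hecke R q qi (r - 1)) (q - qi) - Tgen R q qi (r - 1) i)
    (i0 : Fin (r - 1)) (hi0 : (i0 : ℕ) = 0) :
    Tp R q qi c (r - 1) i0 * Tp R q qi c (r - 1) i0 = 1 ∧
    IsCompl (LinearMap.ker (hat.toLinearMap - LinearMap.id))
      (Submodule.map (LinearMap.mulRight R (Tp R q qi c (r - 1) i0))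
        (LinearMap.ker (hat.toLinearMap - LinearMap.id))) ∧
    (∀ x ∈ LinearMap.ker (hat.toLinearMap - LinearMap.id),
      ∀ y ∈ LinearMap.ker (hat.toLinearMap - LinearMap.id),
        x * y ∈ LinearMap.ker (hat.toLinearMap - LinearMap.id)) ∧
    ∀ x ∈ LinearMap.ker (hat.toLinearMap - LinearMap.id),
      ∀ y ∈ Submodule.map (LinearMap.mulRight R (Tp R q qi c (r - 1) i0))
        (LinearMap.ker (hat.toLinearMap - LinearMap.id)),
        x * y ∈ Submodule.map (LinearMap.mulRight R (Tp R q qi c (r - 1) i0))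
          (LinearMap.ker (hat.toLinearMap - LinearMap.id)) := by
  classical
  set T : Hecke R q qi (r - 1) := Tgen R q qi (r - 1) i0 with hT
  set T' : Hecke R q qi (r - 1) := Tp R q qi c (r - 1) i0 with hT'
  set a : Hecke R q qi (r - 1) := algebraMap R (Hecke R q qi (r - 1)) (q - qi) with ha
  have hquad : T * T = a * T + 1 := by
    have hrel := RingQuot.mkAlgHom_rel R
      (HeckeRel.quad (R := R) (q := q) (qi := qi) (n := r - 1) i0)
    simpa [Tgen, map_mul, map_add, map_one, AlgHom.commutes, ha, hT] using hrel
  have hTa : T * a = a * T := (Algebra.commutes (q - qi) T).symm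
  have hkey : (2 * T - a) * (2 * T - a)
      = algebraMap R (Hecke R q qi (r - 1)) ((q - qi) * (q - qi) + 4) := by
    rw [map_add, map_mul, ← ha, map_ofNat]
    exact aux_key' T a hquad hTa
  have hTpT : T' = algebraMap R (Hecke R q qi (r - 1)) c * (2 * T - a) := by
    rw [hT', Tp, ha, hT]
  have hsq : T' * T' = 1 := by
    have h1 : (2 * T - a) * (algebraMap R (Hecke R q qi (r - 1)) c * (2 * T - a))
        = algebraMap R (Hecke R q qi (r - 1)) c * ((2 * T - a) * (2 * T - a)) := by
      rw [← mul_assoc, ← Algebra.commutes c (2 * T - a), mul_assoc]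
    rw [hTpT, mul_assoc, h1, ← mul_assoc, ← map_mul, hkey, ← map_mul]
    have hscal : c * c * ((q - qi) * (q - qi) + 4) = 1 := by
      linear_combination ((q + qi) * c + 1) * hc + (-4 * c * c) * hq
    rw [hscal, map_one]
  have hhatTp : hat T' = -T' := by
    rw [hTpT, map_mul, map_sub, map_mul, AlgEquiv.commutes]
    have haa : hat a = a := by rw [ha, AlgEquiv.commutes]
    rw [haa]
    have h2' : hat (2 : Hecke R q qi (r - 1)) = 2 := by rw [map_ofNat]
    rw [h2', hT, hhat i0, ← hT]
    exact aux_neg1 _ a T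
  have hmemK : ∀ x : Hecke R q qi (r - 1),
      x ∈ LinearMap.ker (hat.toLinearMap - LinearMap.id) ↔ hat x = x := by
    intro x
    simp [LinearMap.mem_ker, LinearMap.sub_apply, sub_eq_zero]
  have hTT' : ∀ y : Hecke R q qi (r - 1), (y * T') * T' = y := by
    intro y; rw [mul_assoc, hsq, mul_one]
  have hKmul : ∀ x ∈ LinearMap.ker (hat.toLinearMap - LinearMap.id),
      ∀ y ∈ LinearMap.ker (hat.toLinearMap - LinearMap.id),
        x * y ∈ LinearMap.ker (hat.toLinearMap - LinearMap.id) := by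
    intro x hx y hy
    rw [hmemK] at hx hy ⊢
    rw [map_mul, hx, hy]
  have htwo : ∀ x : Hecke R q qi (r - 1), x + x = 0 → x = 0 := by
    intro x hx
    have e1 : x = algebraMap R (Hecke R q qi (r - 1)) (h * 2) * x := by
      rw [mul_comm h 2, h2, map_one, one_mul]
    have e2 : algebraMap R (Hecke R q qi (r - 1)) (h * 2) * x
        = algebraMap R (Hecke R q qi (r - 1)) h * (x + x) := by
      rw [map_mul, map_ofNat, mul_assoc, two_mul]
    rw [e1, e2, hx, mul_zero]
  refine ⟨hsq, ⟨?_, ?_⟩, hKmul, ?_⟩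
  · rw [Submodule.disjoint_def]
    intro x hxK hxM
    obtain ⟨z, hzK, hz⟩ := hxM
    rw [LinearMap.mulRight_apply] at hz
    have hxK' := (hmemK x).1 hxK
    have hzK' := (hmemK z).1 hzK
    have h1 : hat x = -x := by
      rw [← hz, map_mul, hzK', hhatTp]
      exact mul_neg z T'
    have h2x : x + x = 0 := by
      have hxe := h1.symm.trans hxK'
      rw [neg_eq_iff_add_eq_zero] at hxe
      exact hxe
    exact htwo x h2x
  · rw [codisjoint_iff, eq_top_iff]
    intro x _
    rw [Submodule.mem_sup]
    set u : Hecke R q qi (r - 1) := algebraMap R (Hecke R q qi (r - 1)) h * (x + hat x) with hu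
    set w : Hecke R q qi (r - 1) := algebraMap R (Hecke R q qi (r - 1)) h * (x - hat x) with hw
    have hatu : hat u = u := by
      rw [hu, map_mul, AlgEquiv.commutes, map_add, hinv, add_comm]
    have hatw : hat w = -w := by
      rw [hw, map_mul, AlgEquiv.commutes, map_sub, hinv]
      exact aux_neg2 _ _ _
    have hwT : hat (w * T') = w * T' := by
      rw [map_mul, hatw, hhatTp]
      exact neg_mul_neg w T'
    refine ⟨u, (hmemK u).2 hatu, w * T' * T',
      ⟨w * T', (hmemK _).2 hwT, LinearMap.mulRight_apply _ _ _⟩, ?_⟩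
    rw [hTT' w, hu, hw, ← mul_add]
    have hxx : (x + hat x) + (x - hat x) = 2 * x := aux_add x (hat x)
    rw [hxx, ← map_ofNat (algebraMap R (Hecke R q qi (r - 1))) 2, ← mul_assoc, ← map_mul,
      mul_comm h 2, h2, map_one, one_mul]
  · intro x hx y hy
    obtain ⟨z, hzK, hz⟩ := hy
    rw [LinearMap.mulRight_apply] at hz
    refine ⟨x * z, hKmul x hx z hzK, ?_⟩
    rw [LinearMap.mulRight_apply, ← hz, mul_assoc]
end

section
/- Let A be a semisimple algebra acting on V^{⊗r} with image A_q = π_r(H), let C_q = π_r(H^1) be the image of an index-2-type subalgebra, let B_q be the commutant of A_q, let B_q^† = {f : π_r(T'_i) f = −f π_r(T'_i) for all i}, and D_q the commutant of C_q. Then D_q = B_q ⊕ B_q^†, via the decomposition f = (1/2)(f + π_r(T'_1) f π_r(T'_1)) + (1/2)(f − π_r(T'_1) f π_r(T'_1)). -/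
/-- `B_q`: the commutant of the operators `π_r(T'_i)`, `i = 1, …, r-1`. -/
def Bcomm (K W : Type*) [Field K] [AddCommGroup W] [Module K W]
    (r : ℕ) (t : ℕ → Module.End K W) : Submodule K (Module.End K W) where
  carrier := {f | ∀ i, 1 ≤ i → i ≤ r - 1 → t i * f = f * t i}
  add_mem' := by
    intro a b ha hb i h1 h2
    simp only [Set.mem_setOf_eq] at *
    rw [mul_add, add_mul, ha i h1 h2, hb i h1 h2]
  zero_mem' := by
    intro i h1 h2
    simp
  smul_mem' := by
    intro c a ha i h1 h2
    simp only [Set.mem_setOf_eq] at *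
    rw [mul_smul_comm, smul_mul_assoc, ha i h1 h2]

/-- `B_q^†`: the operators anticommuting with all `π_r(T'_i)`, `i = 1, …, r-1`. -/
def Bdag (K W : Type*) [Field K] [AddCommGroup W] [Module K W]
    (r : ℕ) (t : ℕ → Module.End K W) : Submodule K (Module.End K W) where
  carrier := {f | ∀ i, 1 ≤ i → i ≤ r - 1 → t i * f = -(f * t i)}
  add_mem' := by
    intro a b ha hb i h1 h2
    simp only [Set.mem_setOf_eq] at *
    rw [mul_add, add_mul, ha i h1 h2, hb i h1 h2, neg_add]
  zero_mem' := by
    intro i h1 h2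
    simp
  smul_mem' := by
    intro c a ha i h1 h2
    simp only [Set.mem_setOf_eq] at *
    rw [mul_smul_comm, smul_mul_assoc, ha i h1 h2, smul_neg]

/-- `D_q`: the commutant of the operators `π_r(T'_1 T'_{i+1})`, `i = 1, …, r-2`
(the image of the even subalgebra `H¹`). -/
def Dcomm (K W : Type*) [Field K] [AddCommGroup W] [Module K W]
    (r : ℕ) (t : ℕ → Module.End K W) : Submodule K (Module.End K W) where
  carrier := {f | ∀ i, 1 ≤ i → i ≤ r - 2 → t 1 * t (i + 1) * f = f * (t 1 * t (i + 1))}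
  add_mem' := by
    intro a b ha hb i h1 h2
    simp only [Set.mem_setOf_eq] at *
    rw [mul_add, add_mul, ha i h1 h2, hb i h1 h2]
  zero_mem' := by
    intro i h1 h2
    simp
  smul_mem' := by
    intro c a ha i h1 h2
    simp only [Set.mem_setOf_eq] at *
    rw [mul_smul_comm, smul_mul_assoc, ha i h1 h2]

/-- Let the involutive operators `t i = π_r(T'_i)` on `V^{⊗r}` be given (`π_r(T'_i)² = Id`),
let `B_q` be the commutant of the image `A_q` of the Hecke algebra, `B_q^†` the space of
operators anticommuting with all `π_r(T'_i)`, and `D_q` the commutant of the image `C_q`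
of `H¹` (generated by the `π_r(T'_1 T'_{i+1})`).  Then `D_q = B_q ⊕ B_q^†`, via
`f = ½(f + π_r(T'_1) f π_r(T'_1)) + ½(f − π_r(T'_1) f π_r(T'_1))`. -/
theorem stmt_18 (K W : Type*) [Field K] [AddCommGroup W] [Module K W]
    (h2 : (2 : K) ≠ 0) (r : ℕ) (hr : 2 ≤ r)
    (t : ℕ → Module.End K W)
    (ht : ∀ i, 1 ≤ i → i ≤ r - 1 → t i * t i = 1) :
    Dcomm K W r t = Bcomm K W r t ⊔ Bdag K W r t ∧
    Disjoint (Bcomm K W r t) (Bdag K W r t) ∧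
    ∀ f ∈ Dcomm K W r t,
      (2 : K)⁻¹ • (f + t 1 * f * t 1) ∈ Bcomm K W r t ∧
      (2 : K)⁻¹ • (f - t 1 * f * t 1) ∈ Bdag K W r t := by
  have h1r : 1 ≤ r - 1 := by omega
  have ht1 : t 1 * t 1 = 1 := ht 1 le_rfl h1r
  -- key conjugation identity for f ∈ Dcomm
  have key : ∀ f ∈ Dcomm K W r t, ∀ i, 1 ≤ i → i ≤ r - 1 →
      t i * f * t i = t 1 * f * t 1 := by
    intro f hf i hi1 hi2
    rcases Nat.lt_or_ge i 2 with hlt | hge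
    · have : i = 1 := by omega
      rw [this]
    · obtain ⟨j, rfl⟩ : ∃ j, i = j + 1 := ⟨i - 1, by omega⟩
      have hj1 : 1 ≤ j := by omega
      have hj2 : j ≤ r - 2 := by omega
      have hc := hf j hj1 hj2
      have hti : t (j + 1) * t (j + 1) = 1 := ht (j + 1) hi1 hi2
      calc t (j + 1) * f * t (j + 1)
          = (t 1 * t 1) * t (j + 1) * f * t (j + 1) := by rw [ht1, one_mul]
        _ = t 1 * (t 1 * t (j + 1) * f) * t (j + 1) := by noncomm_ring
        _ = t 1 * (f * (t 1 * t (j + 1))) * t (j + 1) := by rw [hc]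
        _ = t 1 * f * t 1 * (t (j + 1) * t (j + 1)) := by noncomm_ring
        _ = t 1 * f * t 1 := by rw [hti, mul_one]
  have memB : ∀ f ∈ Dcomm K W r t,
      (2 : K)⁻¹ • (f + t 1 * f * t 1) ∈ Bcomm K W r t := by
    intro f hf i hi1 hi2
    have hti : t i * t i = 1 := ht i hi1 hi2
    have hk := key f hf i hi1 hi2
    have e1 : t i * f = t 1 * f * t 1 * t i := by
      calc t i * f = t i * f * (t i * t i) := by rw [hti, mul_one]
        _ = (t i * f * t i) * t i := by noncomm_ring
        _ = t 1 * f * t 1 * t i := by rw [hk]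
    have e2 : t i * (t 1 * f * t 1) = f * t i := by
      calc t i * (t 1 * f * t 1) = t i * (t i * f * t i) := by rw [hk]
        _ = (t i * t i) * f * t i := by noncomm_ring
        _ = f * t i := by rw [hti, one_mul]
    show t i * ((2:K)⁻¹ • (f + t 1 * f * t 1)) = ((2:K)⁻¹ • (f + t 1 * f * t 1)) * t i
    rw [mul_smul_comm, smul_mul_assoc, mul_add, add_mul, e1, e2, add_comm]
  have memBd : ∀ f ∈ Dcomm K W r t,
      (2 : K)⁻¹ • (f - t 1 * f * t 1) ∈ Bdag K W r t := by
    intro f hf i hi1 hi2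
    have hti : t i * t i = 1 := ht i hi1 hi2
    have hk := key f hf i hi1 hi2
    have e1 : t i * f = t 1 * f * t 1 * t i := by
      calc t i * f = t i * f * (t i * t i) := by rw [hti, mul_one]
        _ = (t i * f * t i) * t i := by noncomm_ring
        _ = t 1 * f * t 1 * t i := by rw [hk]
    have e2 : t i * (t 1 * f * t 1) = f * t i := by
      calc t i * (t 1 * f * t 1) = t i * (t i * f * t i) := by rw [hk]
        _ = (t i * t i) * f * t i := by noncomm_ring
        _ = f * t i := by rw [hti, one_mul]
    show t i * ((2:K)⁻¹ • (f - t 1 * f * t 1)) = -(((2:K)⁻¹ • (f - t 1 * f * t 1)) * t i)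
    rw [mul_smul_comm, smul_mul_assoc, mul_sub, sub_mul, e1, e2, ← smul_neg]
    congr 1
    noncomm_ring
  refine ⟨?_, ?_, fun f hf => ⟨memB f hf, memBd f hf⟩⟩
  · apply le_antisymm
    · intro f hf
      have : f = (2 : K)⁻¹ • (f + t 1 * f * t 1) + (2 : K)⁻¹ • (f - t 1 * f * t 1) := by
        rw [← smul_add]
        have : (f + t 1 * f * t 1) + (f - t 1 * f * t 1) = (2 : K) • f := by
          rw [two_smul]; abel
        rw [this, smul_smul, inv_mul_cancel₀ h2, one_smul]
      rw [this]
      exact Submodule.add_mem _ (Submodule.mem_sup_left (memB f hf))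
        (Submodule.mem_sup_right (memBd f hf))
    · rw [sup_le_iff]
      constructor
      · intro f hf i hi1 hi2
        have hip1 : 1 ≤ i + 1 := by omega
        have hip2 : i + 1 ≤ r - 1 := by omega
        have e1 := hf 1 le_rfl h1r
        have e2 := hf (i+1) hip1 hip2
        show t 1 * t (i + 1) * f = f * (t 1 * t (i + 1))
        calc t 1 * t (i + 1) * f = t 1 * (t (i + 1) * f) := by noncomm_ring
          _ = t 1 * (f * t (i + 1)) := by rw [e2]
          _ = (t 1 * f) * t (i + 1) := by noncomm_ring
          _ = f * (t 1 * t (i + 1)) := by rw [e1, mul_assoc]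
      · intro f hf i hi1 hi2
        have hip1 : 1 ≤ i + 1 := by omega
        have hip2 : i + 1 ≤ r - 1 := by omega
        have e1 := hf 1 le_rfl h1r
        have e2 := hf (i+1) hip1 hip2
        show t 1 * t (i + 1) * f = f * (t 1 * t (i + 1))
        calc t 1 * t (i + 1) * f = t 1 * (t (i + 1) * f) := by noncomm_ring
          _ = t 1 * (-(f * t (i + 1))) := by rw [e2]
          _ = -(t 1 * f) * t (i + 1) := by noncomm_ring
          _ = -(-(f * t 1)) * t (i + 1) := by rw [e1]
          _ = f * (t 1 * t (i + 1)) := by noncomm_ring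
  · rw [disjoint_iff]
    ext f
    simp only [Submodule.mem_inf, Submodule.mem_bot]
    constructor
    · rintro ⟨hB, hD⟩
      have e1 := hB 1 le_rfl h1r
      have e2 := hD 1 le_rfl h1r
      have : (2 : K) • (f * t 1) = 0 := by
        rw [two_smul]
        calc f * t 1 + f * t 1 = t 1 * f + f * t 1 := by rw [e1]
          _ = -(f * t 1) + f * t 1 := by rw [e2]
          _ = 0 := by abel
      have hft : f * t 1 = 0 := by
        rcases smul_eq_zero.mp this with h | h
        · exact absurd h h2
        · exact h
      calc f = f * (t 1 * t 1) := by rw [ht1, mul_one]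
        _ = (f * t 1) * t 1 := by noncomm_ring
        _ = 0 := by rw [hft]; exact zero_mul _
    · rintro rfl
      exact ⟨Submodule.zero_mem _, Submodule.zero_mem _⟩
end
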